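/- arXiv:1604.05196 — 5 statements merged into one kernel-verified Lean document; each statement's English description precedes it below -/
import Mathlib

section
/- Work in Fin (n+1) → ℤ with standard basis e₀, e₁, …, eₙ and the extended relation vectors v₁, …, vₙ defined in the context (with l symmetric off the diagonal). For an integer f, the vector f·e₀ + Σᵢ (l₀ i)·eᵢ (sum over i = 1, …, n) lies in the ℤ-submodule spanned by {v 1, …, v n} if and only if there exists b : Fin n → ℤ with Q.mulVec b = l₀ and f = Σⱼ (b j)·(q j)·(l₀ j). (This is the framing correction term in the formula tb_new = tb_old − f for the Thurston–Bennequin invariant of L₀ after surgery.) -/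
open Matrix

/-- **The framing correction term.** In `Fin (n+1) → ℤ`, presenting the first
homology of the complement of `L₀` in the surgered manifold via the extended
relation vectors `v i = Fin.cons (q i * l₀ i) (fun j => if j = i then p i else q i * l i j)`,
the vector `f·e₀ + Σᵢ (l₀ i)·eᵢ = Fin.cons f l₀` lies in the span of the relations
if and only if there is `b` with `Q b = l₀` and `f = Σⱼ (b j)(q j)(l₀ j)`. -/
theorem framing_correction_mem_span_iff (n : ℕ) (hn : 1 ≤ n) (p q : Fin n → ℤ)
    (l : Fin n → Fin n → ℤ) (hl : ∀ i j : Fin n, i ≠ j → l i j = l j i)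
    (l₀ : Fin n → ℤ) (f : ℤ) :
    (Fin.cons f l₀ : Fin (n + 1) → ℤ) ∈ Submodule.span ℤ
        (Set.range fun i : Fin n =>
          (Fin.cons (q i * l₀ i)
            (fun j : Fin n => if j = i then p i else q i * l i j) :
              Fin (n + 1) → ℤ)) ↔
      ∃ b : Fin n → ℤ,
        (Matrix.of fun i j : Fin n =>
          if i = j then p i else q j * l i j).mulVec b = l₀ ∧
        f = ∑ j : Fin n, b j * (q j * l₀ j) := by
  rw [Submodule.mem_span_range_iff_exists_fun]
  have key : ∀ c : Fin n → ℤ,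
      (∑ i : Fin n, c i • (Fin.cons (q i * l₀ i)
        (fun j : Fin n => if j = i then p i else q i * l i j) : Fin (n + 1) → ℤ)) =
      (Fin.cons (∑ i : Fin n, c i * (q i * l₀ i))
        ((Matrix.of fun i j : Fin n =>
          if i = j then p i else q j * l i j).mulVec c) : Fin (n + 1) → ℤ) := by
    intro c
    funext x
    refine Fin.cases ?_ ?_ x
    · simp [Finset.sum_apply]
    · intro j
      simp only [Finset.sum_apply, Pi.smul_apply, Fin.cons_succ, Matrix.mulVec,
        dotProduct, Matrix.of_apply]
      refine Finset.sum_congr rfl fun k _ => ?_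
      by_cases h : j = k
      · subst h; simp [mul_comm]
      · have hk : k ≠ j := fun e => h e.symm
        simp only [if_neg h, if_neg hk, smul_eq_mul, hl k j hk]
        ring
  constructor
  · rintro ⟨c, hc⟩
    rw [key] at hc
    refine ⟨c, ?_, ?_⟩
    · funext j
      have := congrFun hc j.succ
      simpa using this
    · have := congrFun hc 0
      simpa using this.symm
  · rintro ⟨b, hb, hf⟩
    refine ⟨b, ?_⟩
    rw [key, hb, hf]
end

section
/- With the generalized linking matrix Q as in the context (with l symmetric off the diagonal), the formula for the new Thurston–Bennequin invariant is independent of the choice of solution: if a, a' : Fin n → ℤ satisfy Q.mulVec a = l₀ and Q.mulVec a' = l₀, then Σⱼ (a j)·(q j)·(l₀ j) = Σⱼ (a' j)·(q j)·(l₀ j). -/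
open Matrix

/-- **Well-definedness of the new Thurston–Bennequin invariant.** The correction
term `Σⱼ (a j)(q j)(l₀ j)` in the formula `tb_new = tb_old − f` does not depend on
the choice of the solution `a` of `Q a = l₀`. -/
theorem tb_correction_term_well_defined (n : ℕ) (hn : 1 ≤ n) (p q : Fin n → ℤ)
    (l : Fin n → Fin n → ℤ) (hl : ∀ i j : Fin n, i ≠ j → l i j = l j i)
    (l₀ : Fin n → ℤ) (a a' : Fin n → ℤ)
    (ha : (Matrix.of fun i j : Fin n =>
      if i = j then p i else q j * l i j).mulVec a = l₀)
    (ha' : (Matrix.of fun i j : Fin n =>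
      if i = j then p i else q j * l i j).mulVec a' = l₀) :
    ∑ j : Fin n, a j * (q j * l₀ j) = ∑ j : Fin n, a' j * (q j * l₀ j) := by
  have hQ : ∀ j i : Fin n, q j * (if j = i then p j else q i * l j i)
      = q i * (if i = j then p i else q j * l i j) := by
    intro j i
    by_cases h : j = i
    · subst h; simp
    · simp only [if_neg h, if_neg (Ne.symm h), hl j i h]; ring
  have e1 : ∀ j, l₀ j = ∑ i, (if j = i then p j else q i * l j i) * a' i := by
    intro j
    rw [← ha']
    simp [Matrix.mulVec, dotProduct]
  have e2 : ∀ j, l₀ j = ∑ i, (if j = i then p j else q i * l j i) * a i := by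
    intro j
    rw [← ha]
    simp [Matrix.mulVec, dotProduct]
  calc ∑ j, a j * (q j * l₀ j)
      = ∑ j, ∑ i, a j * (q j * ((if j = i then p j else q i * l j i) * a' i)) := by
        refine Finset.sum_congr rfl fun j _ => ?_
        rw [e1 j, Finset.mul_sum, Finset.mul_sum]
    _ = ∑ i, ∑ j, a' i * (q i * ((if i = j then p i else q j * l i j) * a j)) := by
        rw [Finset.sum_comm]
        refine Finset.sum_congr rfl fun i _ => Finset.sum_congr rfl fun j _ => ?_
        linear_combination a j * a' i * hQ j i
    _ = ∑ i, a' i * (q i * l₀ i) := by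
        refine Finset.sum_congr rfl fun i _ => ?_
        rw [e2 i, Finset.mul_sum, Finset.mul_sum]
end

section
/- Work in Fin (n+1) → ℤ with standard basis e₀, e₁, …, eₙ and the extended relation vectors v₁, …, vₙ defined in the context (with l symmetric off the diagonal). Suppose there exists a : Fin n → ℤ with Q.mulVec a = l₀ (i.e. L₀ is nullhomologous after the surgery). Then there is a unique integer f such that f·e₀ + Σᵢ (l₀ i)·eᵢ (sum over i = 1, …, n) lies in the ℤ-submodule spanned by {v 1, …, v n}; it is given by f = Σⱼ (a j)·(q j)·(l₀ j). -/
open Matrix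

/-- **Existence and uniqueness of the framing correction term.** If `L₀` is
nullhomologous after the surgery, i.e. `Q a = l₀` for some integer vector `a`,
then there is a unique integer `f` such that `f·e₀ + Σᵢ (l₀ i)·eᵢ = Fin.cons f l₀`
lies in the span of the extended relation vectors, and it is given by
`f = Σⱼ (a j)(q j)(l₀ j)`. -/
theorem framing_correction_exists_unique (n : ℕ) (hn : 1 ≤ n) (p q : Fin n → ℤ)
    (l : Fin n → Fin n → ℤ) (hl : ∀ i j : Fin n, i ≠ j → l i j = l j i)
    (l₀ : Fin n → ℤ) (a : Fin n → ℤ)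
    (ha : (Matrix.of fun i j : Fin n =>
      if i = j then p i else q j * l i j).mulVec a = l₀) :
    (∃! f : ℤ, (Fin.cons f l₀ : Fin (n + 1) → ℤ) ∈ Submodule.span ℤ
        (Set.range fun i : Fin n =>
          (Fin.cons (q i * l₀ i)
            (fun j : Fin n => if j = i then p i else q i * l i j) :
              Fin (n + 1) → ℤ))) ∧
      (Fin.cons (∑ j : Fin n, a j * (q j * l₀ j)) l₀ : Fin (n + 1) → ℤ) ∈
        Submodule.span ℤ
          (Set.range fun i : Fin n =>
            (Fin.cons (q i * l₀ i)
              (fun j : Fin n => if j = i then p i else q i * l i j) :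
                Fin (n + 1) → ℤ)) := by
  set v : Fin n → (Fin (n + 1) → ℤ) := fun i =>
    (Fin.cons (q i * l₀ i)
      (fun j : Fin n => if j = i then p i else q i * l i j) : Fin (n + 1) → ℤ)
    with hv
  have ha' : ∀ j : Fin n, ∑ i, (if j = i then p j else q i * l j i) * a i = l₀ j := by
    intro j
    have := congrFun ha j
    simpa [Matrix.mulVec, dotProduct] using this
  have hs0 : ∀ b : Fin n → ℤ, (∑ i, b i • v i) 0 = ∑ i, b i * (q i * l₀ i) := by
    intro b
    simp [v, Finset.sum_apply]
  have hsj : ∀ (b : Fin n → ℤ) (j : Fin n),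
      (∑ i, b i • v i) j.succ = ∑ i, b i * (if j = i then p i else q i * l i j) := by
    intro b j
    simp [v, Finset.sum_apply]
  -- Existence part: the combination with coefficients `a` hits the target.
  have hmem : (Fin.cons (∑ j : Fin n, a j * (q j * l₀ j)) l₀ : Fin (n + 1) → ℤ) ∈
      Submodule.span ℤ (Set.range v) := by
    rw [Submodule.mem_span_range_iff_exists_fun]
    refine ⟨a, ?_⟩
    funext x
    refine Fin.cases ?_ ?_ x
    · rw [hs0]; simp
    · intro j
      rw [hsj]
      simp only [Fin.cons_succ]
      rw [← ha' j]
      refine Finset.sum_congr rfl fun i _ => ?_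
      by_cases h : j = i
      · subst h; simp; ring
      · simp only [if_neg h]
        rw [hl j i (fun hh => h hh)]
        ring
  refine ⟨⟨∑ j : Fin n, a j * (q j * l₀ j), hmem, ?_⟩, hmem⟩
  intro f hf
  rw [Submodule.mem_span_range_iff_exists_fun] at hf
  obtain ⟨b, hb⟩ := hf
  have hb0 : ∑ i, b i * (q i * l₀ i) = f := by
    have := congrFun hb 0
    rwa [hs0, Fin.cons_zero] at this
  have hbj : ∀ j : Fin n, ∑ i, b i * (if j = i then p i else q i * l i j) = l₀ j := by
    intro j
    have := congrFun hb j.succ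
    rwa [hsj, Fin.cons_succ] at this
  -- Symmetry argument: bᵀ S a = aᵀ S b for the symmetric matrix S i j = qᵢ Q i j.
  rw [← hb0]
  calc ∑ i, b i * (q i * l₀ i)
      = ∑ i, ∑ j, b i * q i * ((if i = j then p i else q j * l i j) * a j) := by
        refine Finset.sum_congr rfl fun i _ => ?_
        rw [← Finset.mul_sum]
        have : ∑ j, (if i = j then p i else q j * l i j) * a j = l₀ i := ha' i
        rw [this]; ring
    _ = ∑ j, ∑ i, b i * q i * ((if i = j then p i else q j * l i j) * a j) :=
        Finset.sum_comm
    _ = ∑ j, a j * q j * ∑ i, b i * (if j = i then p i else q i * l i j) := by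
        refine Finset.sum_congr rfl fun j _ => ?_
        rw [Finset.mul_sum]
        refine Finset.sum_congr rfl fun i _ => ?_
        by_cases h : i = j
        · subst h; simp; ring
        · rw [if_neg h, if_neg (fun hh => h hh.symm)]; ring
    _ = ∑ j, a j * (q j * l₀ j) := by
        refine Finset.sum_congr rfl fun j _ => ?_
        rw [hbj j]; ring
end

section
/- Work in Fin (n+1) → ℤ with standard basis e₀, e₁, …, eₙ and the extended relation vectors v₁, …, vₙ defined in the context (with l symmetric off the diagonal). For a positive integer k and an integer F, the vector F·e₀ + Σᵢ k·(l₀ i)·eᵢ (sum over i = 1, …, n) lies in the ℤ-submodule spanned by {v 1, …, v n} if and only if there exists b : Fin n → ℤ with Q.mulVec b = k • l₀ and F = Σⱼ (b j)·(q j)·(l₀ j). (This yields the correction term tb_ℚ,new = tb_old − F/k for the rational Thurston–Bennequin invariant of a rationally nullhomologous L₀ after surgery.) -/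
open Matrix

/-- **The rational framing correction term.** For a positive integer `k` and an
integer `F`, the vector `F·e₀ + Σᵢ k·(l₀ i)·eᵢ = Fin.cons F (k • l₀)` lies in the
span of the extended relation vectors `v i` if and only if there is `b` with
`Q b = k • l₀` and `F = Σⱼ (b j)(q j)(l₀ j)`. This yields the correction term
`tb_ℚ,new = tb_old − F/k` for the rational Thurston–Bennequin invariant. -/
theorem rational_framing_correction_mem_span_iff (n : ℕ) (hn : 1 ≤ n)
    (p q : Fin n → ℤ)
    (l : Fin n → Fin n → ℤ) (hl : ∀ i j : Fin n, i ≠ j → l i j = l j i)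
    (l₀ : Fin n → ℤ) (k : ℕ) (hk : 0 < k) (F : ℤ) :
    (Fin.cons F ((k : ℤ) • l₀) : Fin (n + 1) → ℤ) ∈ Submodule.span ℤ
        (Set.range fun i : Fin n =>
          (Fin.cons (q i * l₀ i)
            (fun j : Fin n => if j = i then p i else q i * l i j) :
              Fin (n + 1) → ℤ)) ↔
      ∃ b : Fin n → ℤ,
        (Matrix.of fun i j : Fin n =>
          if i = j then p i else q j * l i j).mulVec b = (k : ℤ) • l₀ ∧
        F = ∑ j : Fin n, b j * (q j * l₀ j) := by
  have key : ∀ (c : Fin n → ℤ) (j : Fin n),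
      ((Matrix.of fun i j : Fin n =>
          if i = j then p i else q j * l i j).mulVec c) j
        = ∑ i, c i * (if j = i then p i else q i * l i j) := by
    intro c j
    simp only [Matrix.mulVec, dotProduct, Matrix.of_apply]
    refine Finset.sum_congr rfl fun i _ => ?_
    by_cases h : j = i
    · subst h; simp [mul_comm]
    · simp only [if_neg h]
      rw [hl j i h]; ring
  rw [Submodule.mem_span_range_iff_exists_fun]
  constructor
  · rintro ⟨c, hc⟩
    refine ⟨c, ?_, ?_⟩
    · funext j
      have h := congrFun hc (Fin.succ j)
      rw [key]
      simpa [Finset.sum_apply, Fin.cons_succ] using h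
    · have h := congrFun hc 0
      simpa [Finset.sum_apply, Fin.cons_zero] using h.symm
  · rintro ⟨b, hb, hF⟩
    refine ⟨b, ?_⟩
    funext x
    refine Fin.cases ?_ ?_ x
    · simpa [Finset.sum_apply, Fin.cons_zero] using hF.symm
    · intro j
      have := congrFun hb j
      rw [key] at this
      simpa [Finset.sum_apply, Fin.cons_succ] using this
end

section
/- With the generalized linking matrix Q as in the context (with l symmetric off the diagonal), the rational Thurston–Bennequin correction term is well defined: if k and k' are positive integers and a, a' : Fin n → ℤ satisfy Q.mulVec a = k • l₀ and Q.mulVec a' = k' • l₀, then k' · (Σⱼ (a j)·(q j)·(l₀ j)) = k · (Σⱼ (a' j)·(q j)·(l₀ j)); equivalently, the rational number (1/k)·Σⱼ (a j)·(q j)·(l₀ j) does not depend on the choice of the pair (k, a). -/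
open Matrix

/-- **Well-definedness of the rational Thurston–Bennequin correction term.**
If `Q a = k • l₀` and `Q a' = k' • l₀` for positive integers `k, k'`, then
`k' · Σⱼ (a j)(q j)(l₀ j) = k · Σⱼ (a' j)(q j)(l₀ j)`; equivalently, the rational
number `(1/k)·Σⱼ (a j)(q j)(l₀ j)` is independent of the choice of `(k, a)`. -/
theorem rational_tb_correction_term_well_defined (n : ℕ) (hn : 1 ≤ n)
    (p q : Fin n → ℤ)
    (l : Fin n → Fin n → ℤ) (hl : ∀ i j : Fin n, i ≠ j → l i j = l j i)
    (l₀ : Fin n → ℤ) (k k' : ℕ) (hk : 0 < k) (hk' : 0 < k')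
    (a a' : Fin n → ℤ)
    (ha : (Matrix.of fun i j : Fin n =>
      if i = j then p i else q j * l i j).mulVec a = (k : ℤ) • l₀)
    (ha' : (Matrix.of fun i j : Fin n =>
      if i = j then p i else q j * l i j).mulVec a' = (k' : ℤ) • l₀) :
    (k' : ℤ) * ∑ j : Fin n, a j * (q j * l₀ j) =
      (k : ℤ) * ∑ j : Fin n, a' j * (q j * l₀ j) := by
  set Q : Matrix (Fin n) (Fin n) ℤ :=
    Matrix.of fun i j : Fin n => if i = j then p i else q j * l i j with hQ
  have key : ∀ i j : Fin n, q i * Q i j = q j * Q j i := by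
    intro i j
    by_cases h : i = j
    · subst h; rfl
    · simp only [hQ, Matrix.of_apply, if_neg h, if_neg (Ne.symm h)]
      rw [hl i j h]; ring
  have lhs : (k' : ℤ) * ∑ j : Fin n, a j * (q j * l₀ j) =
      ∑ j : Fin n, ∑ i : Fin n, (q j * Q j i) * (a j * a' i) := by
    rw [Finset.mul_sum]
    refine Finset.sum_congr rfl fun j _ => ?_
    have : ((k' : ℤ) • l₀) j = Q.mulVec a' j := by rw [ha']
    have h2 : (k' : ℤ) * l₀ j = ∑ i : Fin n, Q j i * a' i := by
      simpa [Matrix.mulVec, dotProduct] using this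
    calc (k' : ℤ) * (a j * (q j * l₀ j))
        = (q j * a j) * ((k' : ℤ) * l₀ j) := by ring
      _ = (q j * a j) * ∑ i : Fin n, Q j i * a' i := by rw [h2]
      _ = ∑ i : Fin n, (q j * Q j i) * (a j * a' i) := by
          rw [Finset.mul_sum]; exact Finset.sum_congr rfl fun i _ => by ring
  have rhs : (k : ℤ) * ∑ j : Fin n, a' j * (q j * l₀ j) =
      ∑ i : Fin n, ∑ j : Fin n, (q i * Q i j) * (a j * a' i) := by
    rw [Finset.mul_sum]
    refine Finset.sum_congr rfl fun i _ => ?_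
    have : ((k : ℤ) • l₀) i = Q.mulVec a i := by rw [ha]
    have h2 : (k : ℤ) * l₀ i = ∑ j : Fin n, Q i j * a j := by
      simpa [Matrix.mulVec, dotProduct] using this
    calc (k : ℤ) * (a' i * (q i * l₀ i))
        = (q i * a' i) * ((k : ℤ) * l₀ i) := by ring
      _ = (q i * a' i) * ∑ j : Fin n, Q i j * a j := by rw [h2]
      _ = ∑ j : Fin n, (q i * Q i j) * (a j * a' i) := by
          rw [Finset.mul_sum]; exact Finset.sum_congr rfl fun j _ => by ring
  rw [lhs, rhs, Finset.sum_comm]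
  exact Finset.sum_congr rfl fun i _ => Finset.sum_congr rfl fun j _ => by
    rw [key j i]
end
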